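/- If P and Q are finite posets on d elements with a common linear extension, then Ω(O_P, O_Q) is a Gorenstein Fano (reflexive) polytope of dimension d+1. -/

import Mathlib

def orderPolytope {d : ℕ} (r : Fin d → Fin d → Prop) : Set (Fin d → ℝ) :=
  {x | (∀ i, 0 ≤ x i ∧ x i ≤ 1) ∧ ∀ i j, r i j → x j ≤ x i}

def OmegaPoly {d : ℕ} (A B : Set (Fin d → ℝ)) : Set (Fin (d + 1) → ℝ) :=
  convexHull ℝ
    (((fun x => Fin.snoc x (1 : ℝ)) '' A) ∪ ((fun x => Fin.snoc (-x) (-1 : ℝ)) '' B))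

def dualPoly {n : ℕ} (S : Set (Fin n → ℝ)) : Set (Fin n → ℝ) :=
  {x | ∀ y ∈ S, ∑ i, x i * y i ≤ 1}

def IsLatticePoint {n : ℕ} (x : Fin n → ℝ) : Prop := ∀ i, ∃ z : ℤ, x i = z

/-!
Write a point of `ℝ^{d+1}` as `(w, t)`. Call `b ∈ {-1,0,1}^d` a certificate at `p` if `b ⬝ᵥ x ≤ x p`
on `O_P`, `b ⬝ᵥ y ≥ 0` on `O_Q`, `b p ≥ 0`, and `b` vanishes before `p` in the common linear
extension. Then `(2b, -1)` and `(2(b - e_p), 1)` are lattice points of the dual `Ω*`. If `(w, t)`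
satisfies all inequalities of `Ω*` given by its lattice points with entries in `[-2, 2]`, put
`u p := max_b b ⬝ᵥ w` over the certificates at `p`: these inequalities give
`u ∈ ((1 + t) / 2) • O_P` and `u - w ∈ ((1 - t) / 2) • O_Q`, so `(w, t) ∈ Ω`. The monotonicity
of `u` and `u - w` comes from the moves `b ↦ b` (for `p <_P j`) and `b ↦ b + e_p - e_j`
(for `p <_Q j`) sending certificates at `j` to certificates at `p`; the linear extension is what
keeps the entries of `b + e_p - e_j` in `{-1, 0, 1}`.

So `Ω` is cut out by finitely many lattice inequalities taken from `Ω*`. Separation then gives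
`Ω* = conv` of these lattice points, and `0 ∈ interior Ω`, hence `Ω` is full-dimensional.
Since `Ω ⊆ [-1, 1]^{d+1}`, the origin is its only interior lattice point.
-/

open scoped Pointwise

lemma convex_dualPoly {n : ℕ} (S : Set (Fin n → ℝ)) : Convex ℝ (dualPoly S) := by
  simp only [dualPoly, Set.ofPred_forall]
  exact convex_iInter₂ fun z _ =>
    convex_halfSpace_le ⟨fun a b => add_dotProduct a b z, fun c a => smul_dotProduct c a z⟩ 1

lemma zero_mem_interior_of_forall_dotProduct_le {n : ℕ} {S : Set (Fin n → ℝ)}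
    (V : Finset (Fin n → ℝ)) (hS : ∀ z, (∀ a ∈ V, a ⬝ᵥ z ≤ 1) → z ∈ S) :
    (0 : Fin n → ℝ) ∈ interior S := by
  have hV : ∀ᶠ z in nhds 0, ∀ a ∈ V, a ⬝ᵥ z < 1 :=
    (Filter.eventually_all_finset V).2 fun a _ =>
      (continuous_const.dotProduct continuous_id).continuousAt.eventually_lt continuousAt_const
        (by simp)
  exact mem_interior_iff_mem_nhds.2 (hV.mono fun z hz => hS z fun a ha => (hz a ha).le)

lemma dualPoly_eq_convexHull_of_forall_dotProduct_le {n : ℕ} {S : Set (Fin n → ℝ)}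
    {V : Finset (Fin n → ℝ)} (hVS : ∀ a ∈ V, a ∈ dualPoly S) (h0 : 0 ∈ V)
    (hS : ∀ z, (∀ a ∈ V, a ⬝ᵥ z ≤ 1) → z ∈ S) :
    dualPoly S = convexHull ℝ (V : Set (Fin n → ℝ)) := by
  refine subset_antisymm (fun u hu => ?_) (convexHull_min hVS (convex_dualPoly S))
  by_contra hnot
  obtain ⟨f, c, hfV, hcu⟩ := geometric_hahn_banach_closed_point (convex_convexHull ℝ _)
    (V.finite_toSet.isCompact_convexHull (𝕜 := ℝ)).isClosed hnot
  have hc : 0 < c := by simpa using hfV 0 (subset_convexHull ℝ _ h0)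
  set y : Fin n → ℝ := fun i => f fun j => if i = j then 1 else 0
  have hf : ∀ a, f a = a ⬝ᵥ y := fun a =>
    (f.toLinearMap.pi_apply_eq_sum_univ a).trans (by simp [y, dotProduct])
  have hyS : c⁻¹ • y ∈ S := hS _ fun a ha => by
    rw [dotProduct_smul, smul_eq_mul, ← hf, inv_mul_le_one₀ hc]
    exact (hfV a (subset_convexHull ℝ _ ha)).le
  have huy := hu _ hyS
  rw [← dotProduct, dotProduct_smul, smul_eq_mul, ← hf, inv_mul_le_one₀ hc] at huy
  linarith

lemma eq_zero_of_mem_interior_cube {n : ℕ} {z : Fin n → ℝ}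
    (hz : z ∈ interior (Set.univ.pi fun _ => Set.Icc (-1 : ℝ) 1)) (hlat : IsLatticePoint z) :
    z = 0 := by
  rw [interior_pi_set Set.finite_univ] at hz
  funext i
  obtain ⟨k, hk⟩ := hlat i
  have hi := hz i (Set.mem_univ i)
  rw [interior_Icc, hk, Set.mem_Ioo] at hi
  have hk0 : k = 0 := by
    have h := abs_lt.2 hi
    rw [← Int.cast_abs, ← Int.cast_one, Int.cast_lt] at h
    exact Int.abs_lt_one_iff.1 h
  simp [hk, hk0]

noncomputable def smallLatticePoints (n : ℕ) : Finset (Fin n → ℝ) :=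
  Fintype.piFinset fun _ => {-2, -1, 0, 1, 2}

lemma IsLatticePoint.of_mem_smallLatticePoints {n : ℕ} {a : Fin n → ℝ}
    (ha : a ∈ smallLatticePoints n) : IsLatticePoint a := fun i => by
  have h := Fintype.mem_piFinset.1 ha i
  simp only [Finset.mem_insert, Finset.mem_singleton] at h
  rcases h with h | h | h | h | h
  exacts [⟨-2, by simp [h]⟩, ⟨-1, by simp [h]⟩, ⟨0, by simp [h]⟩, ⟨1, by simp [h]⟩,
    ⟨2, by simp [h]⟩]

lemma snoc_two_smul_mem_smallLatticePoints {d : ℕ} {c : Fin d → ℝ}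
    (hc : ∀ i, c i ∈ ({-1, 0, 1} : Finset ℝ)) {s : ℝ} (hs : s ∈ ({-1, 0, 1} : Finset ℝ)) :
    (Fin.snoc ((2 : ℝ) • c) s : Fin (d + 1) → ℝ) ∈ smallLatticePoints (d + 1) := by
  refine Fintype.mem_piFinset.2 fun i => ?_
  induction i using Fin.lastCases with
  | last =>
    simp only [Finset.mem_insert, Finset.mem_singleton] at hs
    rcases hs with h | h | h <;> simp [h]
  | cast i =>
    have h := hc i
    simp only [Finset.mem_insert, Finset.mem_singleton] at h
    rcases h with h | h | h <;> simp [h]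

section OmegaPoly

variable {d : ℕ} {A B : Set (Fin d → ℝ)}

lemma snoc_dotProduct_snoc (a x : Fin d → ℝ) (s r : ℝ) :
    (Fin.snoc a s : Fin (d + 1) → ℝ) ⬝ᵥ Fin.snoc x r = a ⬝ᵥ x + s * r := by
  simp [dotProduct, Fin.sum_univ_castSucc]

lemma snoc_mem_dualPoly_OmegaPoly {a : Fin d → ℝ} {s : ℝ} (hA : ∀ x ∈ A, a ⬝ᵥ x + s ≤ 1)
    (hB : ∀ y ∈ B, -1 - s ≤ a ⬝ᵥ y) : Fin.snoc a s ∈ dualPoly (OmegaPoly A B) := by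
  intro z hz
  refine convexHull_min (t := {z | Fin.snoc a s ⬝ᵥ z ≤ 1}) ?_ (convex_halfSpace_le
    ⟨fun z z' => dotProduct_add _ z z', fun c z => dotProduct_smul c _ z⟩ 1) hz
  rintro _ (⟨x, hx, rfl⟩ | ⟨y, hy, rfl⟩)
  · simpa [snoc_dotProduct_snoc] using hA x hx
  · have := hB y hy
    simp only [Set.mem_ofPred_eq, snoc_dotProduct_snoc, dotProduct_neg]
    linarith

lemma snoc_mem_OmegaPoly {x y : Fin d → ℝ} (hx : x ∈ A) (hy : y ∈ B) {a b : ℝ} (ha : 0 ≤ a)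
    (hb : 0 ≤ b) (hab : a + b = 1) :
    (Fin.snoc (a • x - b • y) (a - b) : Fin (d + 1) → ℝ) ∈ OmegaPoly A B := by
  have hcomb : (Fin.snoc (a • x - b • y) (a - b) : Fin (d + 1) → ℝ) =
      a • (Fin.snoc x 1 : Fin (d + 1) → ℝ) + b • (Fin.snoc (-y) (-1) : Fin (d + 1) → ℝ) := by
    ext i
    induction i using Fin.lastCases <;> simp [sub_eq_add_neg]
  rw [hcomb, OmegaPoly]
  exact convex_convexHull ℝ _
    (subset_convexHull ℝ _ (Set.mem_union_left _ (Set.mem_image_of_mem _ hx)))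
    (subset_convexHull ℝ _ (Set.mem_union_right _ (Set.mem_image_of_mem _ hy))) ha hb hab

lemma OmegaPoly_subset_cube (hA : A ⊆ Set.univ.pi fun _ => Set.Icc (-1 : ℝ) 1)
    (hB : B ⊆ Set.univ.pi fun _ => Set.Icc (-1 : ℝ) 1) :
    OmegaPoly A B ⊆ Set.univ.pi fun _ => Set.Icc (-1 : ℝ) 1 := by
  refine convexHull_min ?_ (convex_pi fun _ _ => convex_Icc _ _)
  rintro _ (⟨x, hx, rfl⟩ | ⟨y, hy, rfl⟩) i -
  · induction i using Fin.lastCases with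
    | last => simp
    | cast i => simpa using hA hx i (Set.mem_univ i)
  · induction i using Fin.lastCases with
    | last => simp
    | cast i =>
      obtain ⟨h1, h2⟩ := hB hy i (Set.mem_univ i)
      simp only [Fin.snoc_castSucc, Pi.neg_apply, Set.mem_Icc]
      constructor <;> linarith

end OmegaPoly

lemma orderPolytope_subset_cube {d : ℕ} (r : Fin d → Fin d → Prop) :
    orderPolytope r ⊆ Set.univ.pi fun _ => Set.Icc (-1 : ℝ) 1 :=
  fun x hx i _ => ⟨by linarith [(hx.1 i).1], (hx.1 i).2⟩

lemma mem_smul_orderPolytope {d : ℕ} {r : Fin d → Fin d → Prop} {c : ℝ} {u : Fin d → ℝ}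
    (hc : 0 ≤ c) (hu : ∀ i, 0 ≤ u i ∧ u i ≤ c) (hmono : ∀ i j, r i j → u j ≤ u i) :
    u ∈ c • orderPolytope r := by
  rcases hc.eq_or_lt with rfl | hc
  · refine ⟨0, ⟨fun _ => ⟨le_rfl, zero_le_one⟩, fun _ _ _ => le_rfl⟩, ?_⟩
    funext i
    simpa using (hu i).1.antisymm (hu i).2
  · refine ⟨c⁻¹ • u, ⟨fun i => ?_, fun i j hij => ?_⟩, smul_inv_smul₀ hc.ne' u⟩
    · simpa [inv_mul_le_one₀ hc] using ⟨mul_nonneg (inv_nonneg.2 hc.le) (hu i).1, (hu i).2⟩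
    · simpa using mul_le_mul_of_nonneg_left (hmono i j hij) (inv_nonneg.2 hc.le)

section Certificates

variable {d : ℕ} (P Q : PartialOrder (Fin d)) {κ : Type*} [Preorder κ] (ρ : Fin d → κ)

structure IsCertificate (p : Fin d) (b : Fin d → ℝ) : Prop where
  mem_signs : ∀ i, b i ∈ ({-1, 0, 1} : Finset ℝ)
  nonneg_self : 0 ≤ b p
  eq_zero_of_lt : ∀ i, ρ i < ρ p → b i = 0
  dotProduct_le : ∀ x ∈ orderPolytope P.le, b ⬝ᵥ x ≤ x p
  dotProduct_nonneg : ∀ y ∈ orderPolytope Q.le, 0 ≤ b ⬝ᵥ y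

open Classical in
noncomputable def certificates (p : Fin d) : Finset (Fin d → ℝ) :=
  (Fintype.piFinset fun _ => ({-1, 0, 1} : Finset ℝ)).filter (IsCertificate P Q ρ p)

variable {P Q ρ} {p : Fin d} {b : Fin d → ℝ}

lemma mem_certificates : b ∈ certificates P Q ρ p ↔ IsCertificate P Q ρ p b := by
  classical
  simp only [certificates, Finset.mem_filter, Fintype.mem_piFinset, and_iff_right_iff_imp]
  exact fun hb => hb.mem_signs

lemma isCertificate_zero (p : Fin d) : IsCertificate P Q ρ p 0 where
  mem_signs := by simp
  nonneg_self := le_rfl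
  eq_zero_of_lt _ _ := rfl
  dotProduct_le x hx := by simpa using (hx.1 p).1
  dotProduct_nonneg _ _ := by simp

lemma isCertificate_single (p : Fin d) : IsCertificate P Q ρ p (Pi.single p 1) where
  mem_signs i := by by_cases h : i = p <;> simp [h]
  nonneg_self := by simp
  eq_zero_of_lt i hi := Pi.single_eq_of_ne (ne_of_apply_ne ρ hi.ne) 1
  dotProduct_le x _ := by simp [single_dotProduct]
  dotProduct_nonneg y hy := by simpa [single_dotProduct] using (hy.1 p).1

lemma IsCertificate.sub_single_mem_signs (hb : IsCertificate P Q ρ p b) (i : Fin d) :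
    (b - Pi.single p 1 : Fin d → ℝ) i ∈ ({-1, 0, 1} : Finset ℝ) := by
  rcases eq_or_ne i p with rfl | hip
  · have h := hb.mem_signs i
    have h0 := hb.nonneg_self
    simp only [Finset.mem_insert, Finset.mem_singleton] at h
    rcases h with h | h | h
    · rw [h] at h0; linarith
    · simp [h]
    · simp [h]
  · simpa [hip] using hb.mem_signs i

lemma IsCertificate.of_lt_left {j : Fin d} (hpj : P.lt p j) (hρ : ρ p < ρ j)
    (hb : IsCertificate P Q ρ j b) : IsCertificate P Q ρ p b where
  mem_signs := hb.mem_signs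
  nonneg_self := (hb.eq_zero_of_lt p hρ).ge
  eq_zero_of_lt i hi := hb.eq_zero_of_lt i (hi.trans hρ)
  dotProduct_le x hx :=
    (hb.dotProduct_le x hx).trans (hx.2 p j (@le_of_lt _ P.toPreorder _ _ hpj))
  dotProduct_nonneg := hb.dotProduct_nonneg

lemma IsCertificate.of_lt_right {j : Fin d} (hpj : Q.lt p j) (hρ : ρ p < ρ j)
    (hb : IsCertificate P Q ρ j b) :
    IsCertificate P Q ρ p (b + Pi.single p 1 - Pi.single j 1) where
  mem_signs i := by
    rcases eq_or_ne i p with rfl | hip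
    · simp [hb.eq_zero_of_lt i hρ, ne_of_apply_ne ρ hρ.ne]
    · simpa [hip, add_sub_right_comm] using hb.sub_single_mem_signs i
  nonneg_self := by simp [hb.eq_zero_of_lt p hρ, ne_of_apply_ne ρ hρ.ne]
  eq_zero_of_lt i hi := by
    have hip : i ≠ p := ne_of_apply_ne ρ hi.ne
    have hij : i ≠ j := ne_of_apply_ne ρ (hi.trans hρ).ne
    simp [hb.eq_zero_of_lt i (hi.trans hρ), hip, hij]
  dotProduct_le x hx := by
    have := hb.dotProduct_le x hx
    simp only [sub_dotProduct, add_dotProduct, single_dotProduct, one_mul]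
    linarith
  dotProduct_nonneg y hy := by
    have := hb.dotProduct_nonneg y hy
    have := hy.2 p j (@le_of_lt _ Q.toPreorder _ _ hpj)
    simp only [sub_dotProduct, add_dotProduct, single_dotProduct, one_mul]
    linarith

lemma IsCertificate.snoc_mem_dualPoly (hb : IsCertificate P Q ρ p b) :
    (Fin.snoc ((2 : ℝ) • b) (-1) : Fin (d + 1) → ℝ) ∈
      dualPoly (OmegaPoly (orderPolytope P.le) (orderPolytope Q.le)) := by
  refine snoc_mem_dualPoly_OmegaPoly (fun x hx => ?_) (fun y hy => ?_)
  · have := hb.dotProduct_le x hx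
    have := (hx.1 p).2
    rw [smul_dotProduct, smul_eq_mul]
    linarith
  · have := hb.dotProduct_nonneg y hy
    rw [smul_dotProduct, smul_eq_mul]
    linarith

lemma IsCertificate.snoc_sub_mem_dualPoly (hb : IsCertificate P Q ρ p b) :
    (Fin.snoc ((2 : ℝ) • (b - Pi.single p 1)) 1 : Fin (d + 1) → ℝ) ∈
      dualPoly (OmegaPoly (orderPolytope P.le) (orderPolytope Q.le)) := by
  refine snoc_mem_dualPoly_OmegaPoly (fun x hx => ?_) (fun y hy => ?_)
  · have := hb.dotProduct_le x hx
    rw [smul_dotProduct, sub_dotProduct, single_dotProduct, smul_eq_mul]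
    linarith
  · have := hb.dotProduct_nonneg y hy
    have := (hy.1 p).2
    rw [smul_dotProduct, sub_dotProduct, single_dotProduct, smul_eq_mul]
    linarith

variable (P Q ρ) in
noncomputable def certificateSup (w : Fin d → ℝ) (p : Fin d) : ℝ :=
  (certificates P Q ρ p).sup' ⟨0, mem_certificates.2 (isCertificate_zero p)⟩ (· ⬝ᵥ w)

lemma IsCertificate.dotProduct_le_certificateSup (hb : IsCertificate P Q ρ p b)
    (w : Fin d → ℝ) : b ⬝ᵥ w ≤ certificateSup P Q ρ w p :=
  Finset.le_sup' (· ⬝ᵥ w) (mem_certificates.2 hb)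

variable (P Q ρ) in
lemma exists_isCertificate_certificateSup_eq (w : Fin d → ℝ) (p : Fin d) :
    ∃ b, IsCertificate P Q ρ p b ∧ certificateSup P Q ρ w p = b ⬝ᵥ w := by
  obtain ⟨b, hb, heq⟩ := Finset.exists_mem_eq_sup' _ (· ⬝ᵥ w)
  exact ⟨b, mem_certificates.1 hb, heq⟩

lemma certificateSup_antitone_left (hP : ∀ p j, P.lt p j → ρ p < ρ j) (w : Fin d → ℝ)
    {i j : Fin d} (hij : P.le i j) : certificateSup P Q ρ w j ≤ certificateSup P Q ρ w i := by
  rcases @eq_or_lt_of_le _ P _ _ hij with rfl | hlt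
  · exact le_rfl
  obtain ⟨b, hb, heq⟩ := exists_isCertificate_certificateSup_eq P Q ρ w j
  exact heq ▸ (hb.of_lt_left hlt (hP i j hlt)).dotProduct_le_certificateSup w

lemma certificateSup_sub_antitone_right (hQ : ∀ p j, Q.lt p j → ρ p < ρ j) (w : Fin d → ℝ)
    {i j : Fin d} (hij : Q.le i j) :
    certificateSup P Q ρ w j - w j ≤ certificateSup P Q ρ w i - w i := by
  rcases @eq_or_lt_of_le _ Q _ _ hij with rfl | hlt
  · exact le_rfl
  obtain ⟨b, hb, heq⟩ := exists_isCertificate_certificateSup_eq P Q ρ w j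
  have := (hb.of_lt_right hlt (hQ i j hlt)).dotProduct_le_certificateSup w
  simp only [sub_dotProduct, add_dotProduct, single_dotProduct, one_mul] at this
  linarith

variable {w : Fin d → ℝ} {t : ℝ}

lemma certificateSup_mem_smul_orderPolytope (hP : ∀ p j, P.lt p j → ρ p < ρ j) (ht : -1 ≤ t)
    (h : ∀ a ∈ smallLatticePoints (d + 1),
      a ∈ dualPoly (OmegaPoly (orderPolytope P.le) (orderPolytope Q.le)) →
        a ⬝ᵥ Fin.snoc w t ≤ 1) :
    certificateSup P Q ρ w ∈ ((1 + t) / 2) • orderPolytope P.le := by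
  refine mem_smul_orderPolytope (by linarith) (fun p => ⟨?_, ?_⟩)
    fun i j hij => certificateSup_antitone_left hP w hij
  · simpa using (isCertificate_zero (P := P) (Q := Q) (ρ := ρ) p).dotProduct_le_certificateSup w
  · obtain ⟨b, hb, heq⟩ := exists_isCertificate_certificateSup_eq P Q ρ w p
    have := h _ (snoc_two_smul_mem_smallLatticePoints hb.mem_signs (s := -1) (by simp))
      hb.snoc_mem_dualPoly
    rw [snoc_dotProduct_snoc, smul_dotProduct, smul_eq_mul, ← heq] at this
    linarith

lemma certificateSup_sub_mem_smul_orderPolytope (hQ : ∀ p j, Q.lt p j → ρ p < ρ j)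
    (ht : t ≤ 1)
    (h : ∀ a ∈ smallLatticePoints (d + 1),
      a ∈ dualPoly (OmegaPoly (orderPolytope P.le) (orderPolytope Q.le)) →
        a ⬝ᵥ Fin.snoc w t ≤ 1) :
    certificateSup P Q ρ w - w ∈ ((1 - t) / 2) • orderPolytope Q.le := by
  refine mem_smul_orderPolytope (by linarith) (fun p => ⟨?_, ?_⟩)
    fun i j hij => certificateSup_sub_antitone_right hQ w hij
  · have := (isCertificate_single (P := P) (Q := Q) (ρ := ρ) p).dotProduct_le_certificateSup w
    rw [single_dotProduct, one_mul] at this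
    simpa using this
  · obtain ⟨b, hb, heq⟩ := exists_isCertificate_certificateSup_eq P Q ρ w p
    have := h _ (snoc_two_smul_mem_smallLatticePoints hb.sub_single_mem_signs (s := 1) (by simp))
      hb.snoc_sub_mem_dualPoly
    rw [snoc_dotProduct_snoc, smul_dotProduct, sub_dotProduct, single_dotProduct, smul_eq_mul,
      ← heq] at this
    simp only [Pi.sub_apply]
    linarith

theorem snoc_mem_OmegaPoly_orderPolytope_of_forall_dotProduct_le
    (hP : ∀ p j, P.lt p j → ρ p < ρ j) (hQ : ∀ p j, Q.lt p j → ρ p < ρ j)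
    (h : ∀ a ∈ smallLatticePoints (d + 1),
      a ∈ dualPoly (OmegaPoly (orderPolytope P.le) (orderPolytope Q.le)) →
        a ⬝ᵥ Fin.snoc w t ≤ 1) :
    Fin.snoc w t ∈ OmegaPoly (orderPolytope P.le) (orderPolytope Q.le) := by
  have hvert : ∀ s : ℝ, s = -1 ∨ s = 1 → s * t ≤ 1 := by
    intro s hs
    have hlat : (Fin.snoc 0 s : Fin (d + 1) → ℝ) ∈ smallLatticePoints (d + 1) := by
      simpa using snoc_two_smul_mem_smallLatticePoints (c := (0 : Fin d → ℝ)) (by simp) (s := s)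
        (by rcases hs with rfl | rfl <;> simp)
    have hdual : (Fin.snoc 0 s : Fin (d + 1) → ℝ) ∈
        dualPoly (OmegaPoly (orderPolytope P.le) (orderPolytope Q.le)) :=
      snoc_mem_dualPoly_OmegaPoly (fun _ _ => by rcases hs with rfl | rfl <;> norm_num)
        (fun _ _ => by rcases hs with rfl | rfl <;> norm_num)
    simpa [snoc_dotProduct_snoc] using h _ hlat hdual
  have ht_ge : -1 ≤ t := by linarith [hvert (-1) (Or.inl rfl)]
  have ht_le : t ≤ 1 := by linarith [hvert 1 (Or.inr rfl)]
  obtain ⟨x, hx, hxu⟩ := certificateSup_mem_smul_orderPolytope hP ht_ge h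
  obtain ⟨y, hy, hyv⟩ := certificateSup_sub_mem_smul_orderPolytope hQ ht_le h
  beta_reduce at hxu hyv
  convert snoc_mem_OmegaPoly hx hy (a := (1 + t) / 2) (b := (1 - t) / 2) (by linarith)
    (by linarith) (by ring) using 2
  · rw [hxu, hyv, sub_sub_cancel]
  · ring

end Certificates

/-- If the finite posets `P` and `Q` on `d` elements have a common linear
extension `σ`, then `Ω(O_P, O_Q)` is a Gorenstein Fano (reflexive) polytope of
dimension `d+1`. -/
theorem Omega_order_order_reflexive (d : ℕ) (P Q : PartialOrder (Fin d))
    (σ : Equiv.Perm (Fin d))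
    (hP : ∀ a b : Fin d, P.lt (σ a) (σ b) → a < b)
    (hQ : ∀ a b : Fin d, Q.lt (σ a) (σ b) → a < b) :
    affineSpan ℝ (OmegaPoly (orderPolytope P.le) (orderPolytope Q.le)) = ⊤ ∧
    interior (OmegaPoly (orderPolytope P.le) (orderPolytope Q.le)) ∩
        {x : Fin (d + 1) → ℝ | IsLatticePoint x} = {0} ∧
    ∃ V : Finset (Fin (d + 1) → ℝ), (∀ v ∈ V, IsLatticePoint v) ∧
      dualPoly (OmegaPoly (orderPolytope P.le) (orderPolytope Q.le)) =
        convexHull ℝ (V : Set (Fin (d + 1) → ℝ)) := by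
  classical
  set Ω := OmegaPoly (orderPolytope P.le) (orderPolytope Q.le)
  set V := (smallLatticePoints (d + 1)).filter (· ∈ dualPoly Ω)
  have hΩ : ∀ z, (∀ a ∈ V, a ⬝ᵥ z ≤ 1) → z ∈ Ω := fun z hz => by
    rw [← Fin.snoc_init_self z]
    refine snoc_mem_OmegaPoly_orderPolytope_of_forall_dotProduct_le (ρ := fun p => (σ.symm p : ℕ))
      (fun p j h => hP (σ.symm p) (σ.symm j) (by simpa using h))
      (fun p j h => hQ (σ.symm p) (σ.symm j) (by simpa using h)) fun a ha had => ?_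
    rw [Fin.snoc_init_self]
    exact hz a (Finset.mem_filter.2 ⟨ha, had⟩)
  have h0 : (0 : Fin (d + 1) → ℝ) ∈ interior Ω := zero_mem_interior_of_forall_dotProduct_le V hΩ
  refine ⟨(convex_convexHull ℝ _).interior_nonempty_iff_affineSpan_eq_top.1 ⟨0, h0⟩, ?_, V,
    fun v hv => .of_mem_smallLatticePoints (Finset.mem_filter.1 hv).1,
    dualPoly_eq_convexHull_of_forall_dotProduct_le (fun a ha => (Finset.mem_filter.1 ha).2) ?_ hΩ⟩
  · refine subset_antisymm ?_ ?_
    · rintro z ⟨hz, hlat⟩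
      exact eq_zero_of_mem_interior_cube (interior_mono (OmegaPoly_subset_cube
        (orderPolytope_subset_cube _) (orderPolytope_subset_cube _)) hz) hlat
    · rintro _ rfl
      exact ⟨h0, fun i => ⟨0, by simp⟩⟩
  · exact Finset.mem_filter.2 ⟨Fintype.mem_piFinset.2 fun _ => by simp, fun y _ => by simp⟩
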